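/- For every k ≥ 1, the degree-at-most-2 truncation of P_{4k+2}(y_1, ..., y_{4k+2}) equals -1 + Σ_{1 ≤ ℓ ≤ m ≤ 2k+1} y_{2ℓ-1} y_{2m}. -/
import Mathlib


/-- The continuant polynomial evaluated on a list:
`cont [] = 1`, `cont [a] = a`, `cont (a :: b :: l) = a * cont (b :: l) - cont l`. -/
def cont {R : Type*} [CommRing R] : List R → R
  | [] => 1
  | [a] => a
  | a :: b :: l => a * cont (b :: l) - cont l


/-- The continuant polynomial `P_n` in the variables `X a, X (a+1), ..., X (a+n-1)`. -/
noncomputable def contX (a n : ℕ) : MvPolynomial ℕ ℤ :=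
  cont ((List.range n).map fun i => MvPolynomial.X (a + i))

open MvPolynomial Finset in
private noncomputable def Spoly (a m : ℕ) : MvPolynomial ℕ ℤ :=
  ∑ q ∈ range m, ∑ p ∈ range (q + 1), X (a + 2 * p) * X (a + 2 * q + 1)

open MvPolynomial Finset in
private noncomputable def Lpoly (a m : ℕ) : MvPolynomial ℕ ℤ :=
  ∑ p ∈ range (m + 1), X (a + 2 * p)

open MvPolynomial Finset

private lemma contX_zero (a : ℕ) : contX a 0 = 1 := rfl

private lemma contX_one (a : ℕ) : contX a 1 = X a := by
  simp [contX, cont]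

private lemma range_map_shift (a n : ℕ) :
    ((List.range (n + 1)).map fun i => (X (a + i) : MvPolynomial ℕ ℤ)) =
      X a :: ((List.range n).map fun i => X (a + 1 + i)) := by
  rw [List.range_succ_eq_map, List.map_cons, List.map_map]
  congr 1
  apply List.map_congr_left
  intro i _
  show (X (a + (i + 1)) : MvPolynomial ℕ ℤ) = X (a + 1 + i)
  rw [show a + (i + 1) = a + 1 + i from by omega]

private lemma contX_rec (a n : ℕ) :
    contX a (n + 2) = X a * contX (a + 1) (n + 1) - contX (a + 2) n := by
  unfold contX
  rw [range_map_shift a (n + 1), range_map_shift (a + 1) n]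
  have h : ((List.range n).map fun i => (X (a + 1 + 1 + i) : MvPolynomial ℕ ℤ)) =
      (List.range n).map fun i => X (a + 2 + i) := by
    apply List.map_congr_left; intro i _
    rw [show a + 1 + 1 + i = a + 2 + i from by omega]
  rw [h]
  rfl

private lemma Spoly_rec (a m : ℕ) :
    Spoly a (m + 1) = X a * Lpoly (a + 1) m + Spoly (a + 2) m := by
  unfold Spoly Lpoly
  rw [Finset.mul_sum]
  have inner : ∀ q : ℕ, (∑ p ∈ range (q + 1), (X (a + 2 * p) * X (a + 2 * q + 1) :
      MvPolynomial ℕ ℤ)) =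
      X a * X (a + 1 + 2 * q) + ∑ p ∈ range q, X (a + 2 + 2 * p) * X (a + 2 * q + 1) := by
    intro q
    rw [Finset.sum_range_succ', add_comm]
    congr 1
    · rw [show a + 2 * 0 = a from by omega, show a + 2 * q + 1 = a + 1 + 2 * q from by omega]
    · apply Finset.sum_congr rfl; intro p _
      rw [show a + 2 * (p + 1) = a + 2 + 2 * p from by omega]
  simp_rw [inner]
  rw [Finset.sum_add_distrib]
  congr 1
  rw [Finset.sum_range_succ']
  simp only [Finset.range_zero, Finset.sum_empty, add_zero]
  apply Finset.sum_congr rfl; intro q _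
  apply Finset.sum_congr rfl; intro p _
  rw [show a + 2 * (q + 1) + 1 = a + 2 + 2 * q + 1 from by omega]

/-- Degree-≤2 coefficient agreement is preserved by multiplication by a variable. -/
private lemma coeff_X_mul_congr {p q : MvPolynomial ℕ ℤ} (a : ℕ)
    (h : ∀ d : ℕ →₀ ℕ, (d.sum fun _ e => e) ≤ 2 → coeff d p = coeff d q)
    (d : ℕ →₀ ℕ) (hd : (d.sum fun _ e => e) ≤ 2) :
    coeff d (X a * p) = coeff d (X a * q) := by
  classical
  rw [coeff_X_mul', coeff_X_mul']
  split
  · next ha =>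
    apply h
    have h1 : Finsupp.single a 1 ≤ d := by
      rw [Finsupp.single_le_iff]
      rw [Finsupp.mem_support_iff] at ha
      omega
    have h2 : d - Finsupp.single a 1 + Finsupp.single a 1 = d := tsub_add_cancel_of_le h1
    have h3 : ((d - Finsupp.single a 1).sum fun _ e => e) +
        ((Finsupp.single a 1 : ℕ →₀ ℕ).sum fun _ e => e) = d.sum fun _ e => e := by
      rw [← Finsupp.sum_add_index' (fun _ => rfl) (fun _ _ _ => rfl), h2]
    rw [Finsupp.sum_single_index rfl] at h3
    omega
  · rfl

private lemma XS_coeff_zero (a b m : ℕ) (d : ℕ →₀ ℕ)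
    (hd : (d.sum fun _ e => e) ≤ 2) :
    coeff d (X a * Spoly b m) = 0 := by
  have hhom : (X a * Spoly b m : MvPolynomial ℕ ℤ).IsHomogeneous 3 := by
    have h1 : (X a : MvPolynomial ℕ ℤ).IsHomogeneous 1 := isHomogeneous_X _ _
    have h2 : (Spoly b m).IsHomogeneous 2 := by
      apply IsHomogeneous.sum
      intro q _
      apply IsHomogeneous.sum
      intro p _
      exact (isHomogeneous_X _ _).mul (isHomogeneous_X _ _)
    simpa using h1.mul h2
  apply hhom.coeff_eq_zero
  have hdeg : d.degree = d.sum fun _ e => e := rfl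
  omega

private lemma main_trunc (m : ℕ) : ∀ a : ℕ,
    (∀ d : ℕ →₀ ℕ, (d.sum fun _ e => e) ≤ 2 →
      coeff d (contX a (2 * m)) = coeff d ((-1) ^ m * (1 - Spoly a m))) ∧
    (∀ d : ℕ →₀ ℕ, (d.sum fun _ e => e) ≤ 2 →
      coeff d (contX a (2 * m + 1)) = coeff d ((-1) ^ m * Lpoly a m)) := by
  induction m with
  | zero =>
    intro a
    constructor
    · intro d _; simp [contX_zero, Spoly]
    · intro d _; simp [contX_one, Lpoly]
  | succ m ih =>
    have even : ∀ a : ℕ, ∀ d : ℕ →₀ ℕ, (d.sum fun _ e => e) ≤ 2 →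
        coeff d (contX a (2 * (m + 1))) = coeff d ((-1) ^ (m + 1) * (1 - Spoly a (m + 1))) := by
      intro a d hd
      rw [show 2 * (m + 1) = 2 * m + 2 from by ring, contX_rec, coeff_sub,
        coeff_X_mul_congr a ((ih (a + 1)).2) d hd, ((ih (a + 2)).1) d hd, ← coeff_sub]
      congr 1
      rw [Spoly_rec]
      ring
    intro a
    refine ⟨even a, ?_⟩
    intro d hd
    rw [show 2 * (m + 1) + 1 = 2 * m + 1 + 2 from by ring, contX_rec, coeff_sub,
      show 2 * m + 1 + 1 = 2 * (m + 1) from by ring]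
    rw [coeff_X_mul_congr a (even (a + 1)) d hd, ((ih (a + 2)).2) d hd]
    have hL : Lpoly a (m + 1) = X a + Lpoly (a + 2) m := by
      unfold Lpoly
      rw [Finset.sum_range_succ']
      have hidx : ∀ p : ℕ, (X (a + 2 * (p + 1)) : MvPolynomial ℕ ℤ) = X (a + 2 + 2 * p) := by
        intro p; rw [show a + 2 * (p + 1) = a + 2 + 2 * p from by omega]
      simp only [hidx]
      rw [show a + 2 * 0 = a from by omega, add_comm]
    rw [hL]
    have hz : coeff d ((-1 : MvPolynomial ℕ ℤ) ^ (m + 1) * (X a * Spoly (a + 1) (m + 1))) = 0 := by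
      have hC : ((-1 : MvPolynomial ℕ ℤ)) ^ (m + 1) = C ((-1 : ℤ) ^ (m + 1)) := by
        rw [map_pow, map_neg, map_one]
      rw [hC, coeff_C_mul, XS_coeff_zero _ _ _ d hd, mul_zero]
    have key : coeff d (X a * ((-1 : MvPolynomial ℕ ℤ) ^ (m + 1) * (1 - Spoly (a + 1) (m + 1))))
        = coeff d ((-1) ^ (m + 1) * X a) := by
      rw [show X a * ((-1 : MvPolynomial ℕ ℤ) ^ (m + 1) * (1 - Spoly (a + 1) (m + 1))) =
        (-1) ^ (m + 1) * X a - (-1) ^ (m + 1) * (X a * Spoly (a + 1) (m + 1)) from by ring,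
        coeff_sub, hz, sub_zero]
    rw [key]
    rw [show ((-1 : MvPolynomial ℕ ℤ) ^ m * Lpoly (a + 2) m) =
      -((-1) ^ (m + 1) * Lpoly (a + 2) m) from by ring, coeff_neg]
    rw [show ((-1 : MvPolynomial ℕ ℤ) ^ (m + 1) * (X a + Lpoly (a + 2) m)) =
      (-1) ^ (m + 1) * X a + (-1) ^ (m + 1) * Lpoly (a + 2) m from by ring, coeff_add]
    ring

/-- For `k ≥ 1`, the degree-at-most-2 truncation of `P_{4k+2}(y_1, ..., y_{4k+2})`
equals `-1 + Σ_{1 ≤ ℓ ≤ m ≤ 2k+1} y_{2ℓ-1} y_{2m}`. -/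
theorem continuant_trunc_4k2 (k : ℕ) (hk : 1 ≤ k) (d : ℕ →₀ ℕ)
    (hd : (d.sum fun _ e => e) ≤ 2) :
    MvPolynomial.coeff d (contX 1 (4 * k + 2)) =
      MvPolynomial.coeff d
        (-1 + ∑ q ∈ Finset.range (2 * k + 1), ∑ p ∈ Finset.range (q + 1),
          MvPolynomial.X (2 * p + 1) * MvPolynomial.X (2 * q + 2)) := by
  have h := (main_trunc (2 * k + 1) 1).1 d hd
  rw [show 2 * (2 * k + 1) = 4 * k + 2 from by ring] at h
  rw [h]
  congr 1
  have hS : Spoly 1 (2 * k + 1) =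
      ∑ q ∈ Finset.range (2 * k + 1), ∑ p ∈ Finset.range (q + 1),
        MvPolynomial.X (2 * p + 1) * MvPolynomial.X (2 * q + 2) := by
    unfold Spoly
    apply Finset.sum_congr rfl; intro q _
    apply Finset.sum_congr rfl; intro p _
    rw [show 1 + 2 * p = 2 * p + 1 from by omega, show 1 + 2 * q + 1 = 2 * q + 2 from by omega]
  rw [← hS]
  have hodd : (-1 : MvPolynomial ℕ ℤ) ^ (2 * k + 1) = -1 := Odd.neg_one_pow ⟨k, by ring⟩
  rw [hodd]
  ring
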